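/- arXiv:2507.04467 — 2 statements merged into one kernel-verified Lean document; each statement's English description precedes it below -/
import Mathlib

section
/- Let $m \in \mathbb{N}$, $k \in \mathbb{N}$, and let $\lambda \in \mathbb{R}$ with $|\lambda| \leq 2^{m+3k+1}$. Let $q \in \mathbb{R}$ with $2^{m/2} \leq q \leq 2^{m/2+1}$, set $a := q\,2^{-m/2-k}$, and let $t \in [a, a + 2^{-m/2-k}]$. Then $$\big|\lambda t^3 - \big(3\lambda a^2 t - 2\lambda a^3\big)\big| \leq 16.$$ -/
theorem statement6 (m k : ℕ) (lam : ℝ) (hlam : |lam| ≤ (2:ℝ) ^ (m + 3 * k + 1))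
    (q : ℝ) (hq₁ : (2:ℝ) ^ ((m : ℝ) / 2) ≤ q) (hq₂ : q ≤ (2:ℝ) ^ ((m : ℝ) / 2 + 1)) :
    ∀ t ∈ Set.Icc (q * (2:ℝ) ^ (-(m : ℝ) / 2 - (k : ℝ)))
        (q * (2:ℝ) ^ (-(m : ℝ) / 2 - (k : ℝ)) + (2:ℝ) ^ (-(m : ℝ) / 2 - (k : ℝ))),
      |lam * t ^ 3 -
          (3 * lam * (q * (2:ℝ) ^ (-(m : ℝ) / 2 - (k : ℝ))) ^ 2 * t -
            2 * lam * (q * (2:ℝ) ^ (-(m : ℝ) / 2 - (k : ℝ))) ^ 3)| ≤ 16 := by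
  rintro t ⟨ht1, ht2⟩
  set e : ℝ := (2:ℝ) ^ (-(m : ℝ) / 2 - (k : ℝ)) with he
  have he0 : 0 < e := Real.rpow_pos_of_pos (by norm_num) _
  set a : ℝ := q * e with ha
  have hq0 : 0 < q := lt_of_lt_of_le (Real.rpow_pos_of_pos (by norm_num) _) hq₁
  have ha0 : 0 < a := mul_pos hq0 he0
  have hpos : 0 ≤ t + 2 * a := by linarith
  have key : lam * t ^ 3 - (3 * lam * a ^ 2 * t - 2 * lam * a ^ 3)
      = lam * ((t - a) ^ 2 * (t + 2 * a)) := by ring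
  rw [key, abs_mul, abs_of_nonneg (mul_nonneg (sq_nonneg _) hpos)]
  -- bounds
  have hek : e ≤ (2:ℝ) ^ (-(k:ℝ)) := by
    apply Real.rpow_le_rpow_of_exponent_le (by norm_num)
    have : (0:ℝ) ≤ (m:ℝ) := Nat.cast_nonneg m
    linarith
  have hae : a ≤ (2:ℝ) ^ (1 - (k:ℝ)) := by
    calc a ≤ (2:ℝ) ^ ((m:ℝ)/2 + 1) * e := by
            exact mul_le_mul_of_nonneg_right hq₂ he0.le
      _ = (2:ℝ) ^ (1 - (k:ℝ)) := by
            rw [he, ← Real.rpow_add (by norm_num)]; ring_nf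
  have h21 : (2:ℝ) ^ (1 - (k:ℝ)) = 2 * (2:ℝ) ^ (-(k:ℝ)) := by
    rw [Real.rpow_sub (by norm_num), Real.rpow_one, Real.rpow_neg (by norm_num)]
    field_simp
  have hsum : t + 2 * a ≤ 8 * (2:ℝ) ^ (-(k:ℝ)) := by
    have : t ≤ a + e := ht2
    rw [h21] at hae
    linarith
  have hsq : (t - a) ^ 2 ≤ e ^ 2 := by
    have h1 : 0 ≤ t - a := by linarith
    have h2 : t - a ≤ e := by linarith
    nlinarith
  have hlam' : |lam| ≤ (2:ℝ) ^ ((m:ℝ) + 3 * (k:ℝ) + 1) := by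
    rwa [show ((m:ℝ) + 3 * (k:ℝ) + 1) = ((m + 3 * k + 1 : ℕ) : ℝ) by push_cast; ring,
      Real.rpow_natCast]
  calc |lam| * ((t - a) ^ 2 * (t + 2 * a))
      ≤ (2:ℝ) ^ ((m:ℝ) + 3 * (k:ℝ) + 1) * (e ^ 2 * (8 * (2:ℝ) ^ (-(k:ℝ)))) := by
        apply mul_le_mul hlam' _ (mul_nonneg (sq_nonneg _) hpos)
          (Real.rpow_nonneg (by norm_num) _)
        apply mul_le_mul hsq hsum hpos (sq_nonneg _)
    _ = 16 := by
        rw [he, ← Real.rpow_natCast ((2:ℝ) ^ (-(m : ℝ) / 2 - (k : ℝ))) 2,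
          ← Real.rpow_mul (by norm_num)]
        rw [show (2:ℝ) ^ ((m:ℝ) + 3 * (k:ℝ) + 1) *
            ((2:ℝ) ^ ((-(m : ℝ) / 2 - (k:ℝ)) * (2:ℕ)) * (8 * (2:ℝ) ^ (-(k:ℝ))))
            = 8 * ((2:ℝ) ^ ((m:ℝ) + 3 * (k:ℝ) + 1) * (2:ℝ) ^ ((-(m : ℝ) / 2 - (k:ℝ)) * (2:ℕ))
              * (2:ℝ) ^ (-(k:ℝ))) by ring,
          ← Real.rpow_add (by norm_num), ← Real.rpow_add (by norm_num)]
        norm_num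
        rw [show ((m:ℝ) + 3 * (k:ℝ) + 1 + (-(m : ℝ) / 2 - (k:ℝ)) * 2 + -(k:ℝ)) = 1 by ring]
        norm_num
end

section
/- Let $j \in \mathbb{N}$ be even, $k \in \mathbb{N}$, $p, q \in \mathbb{Z}$ with $2^{j/2} \leq q \leq 2^{j/2+1}$. Suppose $x \in [p\, 2^{-j/2-2k}, (p+1) 2^{-j/2-2k}]$ and $t \in [q\, 2^{-j/2-k}, (q+1) 2^{-j/2-k}]$. Then $$\Big| 2^{j/2+k}(x - t) - \Big(\frac{p}{2^k} - q\Big) \Big| \leq 2 \qquad\text{and}\qquad \Big| 2^{j/2+2k}(x + t^2) - \Big(p + \frac{q^2}{2^{j/2}}\Big) \Big| \leq 6.$$ -/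
theorem statement13 (j k : ℕ) (hj : Even j) (p q : ℤ)
    (hq₁ : (2:ℝ) ^ (j / 2) ≤ (q : ℝ)) (hq₂ : (q : ℝ) ≤ (2:ℝ) ^ (j / 2 + 1))
    (x t : ℝ)
    (hx : x ∈ Set.Icc ((p : ℝ) * (2:ℝ) ^ (-((j : ℤ) / 2) - 2 * (k : ℤ)))
        (((p : ℝ) + 1) * (2:ℝ) ^ (-((j : ℤ) / 2) - 2 * (k : ℤ))))
    (ht : t ∈ Set.Icc ((q : ℝ) * (2:ℝ) ^ (-((j : ℤ) / 2) - (k : ℤ)))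
        (((q : ℝ) + 1) * (2:ℝ) ^ (-((j : ℤ) / 2) - (k : ℤ)))) :
    |(2:ℝ) ^ (j / 2 + k) * (x - t) - ((p : ℝ) / (2:ℝ) ^ k - (q : ℝ))| ≤ 2 ∧
    |(2:ℝ) ^ (j / 2 + 2 * k) * (x + t ^ 2) - ((p : ℝ) + (q : ℝ) ^ 2 / (2:ℝ) ^ (j / 2))| ≤ 6 := by
  obtain ⟨m, hm⟩ := hj
  have hjm : j = 2 * m := by omega
  subst hjm
  have h1 : (2*m)/2 = m := by omega
  have h2 : ((2*m : ℕ) : ℤ)/2 = (m : ℤ) := by push_cast; omega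
  rw [h1] at hq₁ hq₂ ⊢
  rw [h2] at hx ht
  obtain ⟨hx1, hx2⟩ := hx
  obtain ⟨ht1, ht2⟩ := ht
  set E : ℝ := (2:ℝ) ^ (-(m:ℤ) - 2 * (k:ℤ)) with hE
  set F : ℝ := (2:ℝ) ^ (-(m:ℤ) - (k:ℤ)) with hF
  have two_ne : (2:ℝ) ≠ 0 := by norm_num
  have key1 : (2:ℝ) ^ (m + k) * F = 1 := by
    rw [hF, ← zpow_natCast (2:ℝ) (m+k), ← zpow_add₀ two_ne]
    norm_num
  have key2 : (2:ℝ) ^ (m + k) * E = ((2:ℝ) ^ k)⁻¹ := by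
    rw [hE, ← zpow_natCast (2:ℝ) (m+k), ← zpow_add₀ two_ne, ← zpow_natCast (2:ℝ) k,
      ← zpow_neg]
    congr 1
    push_cast
    ring
  have key3 : (2:ℝ) ^ (m + 2*k) * E = 1 := by
    rw [hE, ← zpow_natCast (2:ℝ) (m+2*k), ← zpow_add₀ two_ne]
    norm_num
  have key4 : (2:ℝ) ^ (m + 2*k) * F ^ 2 = ((2:ℝ) ^ m)⁻¹ := by
    rw [hF, ← zpow_natCast (2:ℝ) (m+2*k), sq, ← zpow_add₀ two_ne, ← zpow_add₀ two_ne,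
      ← zpow_natCast (2:ℝ) m, ← zpow_neg]
    congr 1
    push_cast
    ring
  have hP1 : (0:ℝ) < 2 ^ (m + k) := by positivity
  have hP2 : (0:ℝ) < 2 ^ (m + 2*k) := by positivity
  have hFpos : (0:ℝ) < F := by positivity
  have hEpos : (0:ℝ) < E := by positivity
  have hmpos : (0:ℝ) < 2 ^ m := by positivity
  have hkpos : (0:ℝ) < 2 ^ k := by positivity
  have hki : ((2:ℝ) ^ k)⁻¹ ≤ 1 := by
    rw [inv_le_one_iff₀]; right; exact one_le_pow₀ one_le_two
  have hmi : ((2:ℝ) ^ m)⁻¹ ≤ 1 := by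
    rw [inv_le_one_iff₀]; right; exact one_le_pow₀ one_le_two
  -- bounds on scaled x, t
  have hxl : (p:ℝ) * ((2:ℝ)^k)⁻¹ ≤ 2 ^ (m+k) * x := by
    calc (p:ℝ) * ((2:ℝ)^k)⁻¹ = 2 ^ (m+k) * ((p:ℝ) * E) := by rw [← key2]; ring
    _ ≤ 2 ^ (m+k) * x := mul_le_mul_of_nonneg_left hx1 hP1.le
  have hxu : 2 ^ (m+k) * x ≤ ((p:ℝ)+1) * ((2:ℝ)^k)⁻¹ := by
    calc 2 ^ (m+k) * x ≤ 2 ^ (m+k) * (((p:ℝ)+1) * E) := mul_le_mul_of_nonneg_left hx2 hP1.le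
    _ = ((p:ℝ)+1) * ((2:ℝ)^k)⁻¹ := by rw [← key2]; ring
  have htl : (q:ℝ) ≤ 2 ^ (m+k) * t := by
    calc (q:ℝ) = 2 ^ (m+k) * ((q:ℝ) * F) := by rw [show 2 ^ (m+k) * ((q:ℝ) * F) = (q:ℝ) * (2 ^ (m+k) * F) by ring, key1]; ring
    _ ≤ 2 ^ (m+k) * t := mul_le_mul_of_nonneg_left ht1 hP1.le
  have htu : 2 ^ (m+k) * t ≤ (q:ℝ) + 1 := by
    calc 2 ^ (m+k) * t ≤ 2 ^ (m+k) * (((q:ℝ)+1) * F) := mul_le_mul_of_nonneg_left ht2 hP1.le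
    _ = (q:ℝ) + 1 := by rw [show 2 ^ (m+k) * (((q:ℝ)+1) * F) = ((q:ℝ)+1) * (2 ^ (m+k) * F) by ring, key1]; ring
  have hx2l : (p:ℝ) ≤ 2 ^ (m+2*k) * x := by
    calc (p:ℝ) = 2 ^ (m+2*k) * ((p:ℝ) * E) := by rw [show 2 ^ (m+2*k) * ((p:ℝ) * E) = (p:ℝ) * (2 ^ (m+2*k) * E) by ring, key3]; ring
    _ ≤ 2 ^ (m+2*k) * x := mul_le_mul_of_nonneg_left hx1 hP2.le
  have hx2u : 2 ^ (m+2*k) * x ≤ (p:ℝ) + 1 := by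
    calc 2 ^ (m+2*k) * x ≤ 2 ^ (m+2*k) * (((p:ℝ)+1) * E) := mul_le_mul_of_nonneg_left hx2 hP2.le
    _ = (p:ℝ) + 1 := by rw [show 2 ^ (m+2*k) * (((p:ℝ)+1) * E) = ((p:ℝ)+1) * (2 ^ (m+2*k) * E) by ring, key3]; ring
  have hqpos : (0:ℝ) < (q:ℝ) := lt_of_lt_of_le hmpos hq₁
  have htpos : (0:ℝ) ≤ t := le_trans (by positivity) ht1
  have ht2l : (q:ℝ)^2 * ((2:ℝ)^m)⁻¹ ≤ 2 ^ (m+2*k) * t^2 := by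
    have hqF : (0:ℝ) ≤ (q:ℝ) * F := by positivity
    have : (q:ℝ)^2 * F^2 ≤ t^2 := by
      rw [← mul_pow]; exact pow_le_pow_left₀ hqF ht1 2
    calc (q:ℝ)^2 * ((2:ℝ)^m)⁻¹ = (q:ℝ)^2 * (2 ^ (m+2*k) * F^2) := by rw [key4]
    _ = 2 ^ (m+2*k) * ((q:ℝ)^2 * F^2) := by ring
    _ ≤ 2 ^ (m+2*k) * t^2 := mul_le_mul_of_nonneg_left this hP2.le
  have ht2u : 2 ^ (m+2*k) * t^2 ≤ ((q:ℝ)+1)^2 * ((2:ℝ)^m)⁻¹ := by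
    have : t^2 ≤ ((q:ℝ)+1)^2 * F^2 := by
      rw [← mul_pow]; exact pow_le_pow_left₀ htpos ht2 2
    calc 2 ^ (m+2*k) * t^2 ≤ 2 ^ (m+2*k) * (((q:ℝ)+1)^2 * F^2) := mul_le_mul_of_nonneg_left this hP2.le
    _ = ((q:ℝ)+1)^2 * (2 ^ (m+2*k) * F^2) := by ring
    _ = ((q:ℝ)+1)^2 * ((2:ℝ)^m)⁻¹ := by rw [key4]
  have hd1 : (2:ℝ) ^ (m+k) * (x - t) = 2 ^ (m+k) * x - 2 ^ (m+k) * t := by ring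
  have hd2 : (2:ℝ) ^ (m+2*k) * (x + t^2) = 2 ^ (m+2*k) * x + 2 ^ (m+2*k) * t^2 := by ring
  have hq2 : (q:ℝ) * ((2:ℝ)^m)⁻¹ ≤ 2 := by
    have := mul_le_mul_of_nonneg_right hq₂ (le_of_lt (inv_pos.mpr hmpos))
    rw [pow_succ] at this
    have h2m : (2:ℝ)^m * 2 * (2^m)⁻¹ = 2 := by field_simp
    linarith
  have hexp : ((q:ℝ)+1)^2 * ((2:ℝ)^m)⁻¹
      = (q:ℝ)^2 * ((2:ℝ)^m)⁻¹ + 2 * ((q:ℝ) * ((2:ℝ)^m)⁻¹) + ((2:ℝ)^m)⁻¹ := by ring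
  have hpi : (0:ℝ) ≤ ((2:ℝ)^k)⁻¹ := by positivity
  constructor
  · rw [abs_le, div_eq_mul_inv, hd1]
    constructor <;> linarith
  · rw [abs_le, div_eq_mul_inv, hd2]
    constructor <;> linarith
end
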